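/- arXiv:2102.05419 — 7 statements merged into one kernel-verified Lean document; each statement's English description precedes it below -/
import Mathlib

section
/- Let Σ' ⊆ Σ be signatures and let M = ⟨V, D, ·_M⟩ be a Σ-PNmatrix that is Σ'-deterministic. If M† = ⟨V†, D†, ·_{M†}⟩ is a rexpansion of M, A ∈ L_{Σ'}({p₁,…,pₙ}) is a formula using only connectives from Σ', and y, z ∈ A_{M†}(x₁,…,xₙ) for some x₁,…,xₙ ∈ V†, then y ∈ D† if and only if z ∈ D†. -/
/-! Contracting an `M†`-valuation yields an `M`-valuation, and whether a value of `M†` is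
designated depends only on its contraction. Since `M` is `Σ'`-deterministic, any two
`M`-valuations that agree on `p₁, …, pₙ` agree on `A`, so `y` and `z` have the same contraction. -/

set_option autoImplicit false

namespace PNPaper

/-- Formulas over a propositional signature given by a type `C` of connectives
with arity function `ar`, generated over a set (type) `P` of sentential variables. -/
inductive Fm (C : Type) (ar : C → ℕ) (P : Type) : Type where
  | var : P → Fm C ar P
  | app : (c : C) → (Fin (ar c) → Fm C ar P) → Fm C ar P

variable {C : Type} {ar : C → ℕ} {P Q : Type} {V W : Type}

/-- Substitution, extended to the unique endomorphism of the formula algebra. -/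
def Fm.subst (σ : Q → Fm C ar P) : Fm C ar Q → Fm C ar P
  | .var q => σ q
  | .app c As => .app c (fun i => (As i).subst σ)

/-- The set of substitution instances of formulas in `Ax`. -/
def instSet (Ax : Set (Fm C ar P)) : Set (Fm C ar P) :=
  {B | ∃ A ∈ Ax, ∃ σ : P → Fm C ar P, B = A.subst σ}

/-- A formula uses only connectives from `S`. -/
def Fm.usesOnly (S : Set C) : Fm C ar P → Prop
  | .var _ => True
  | .app c As => c ∈ S ∧ ∀ i, (As i).usesOnly S

/-- All variables of the formula belong to `Vs`. -/
def Fm.varsIn (Vs : Set P) : Fm C ar P → Prop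
  | .var p => p ∈ Vs
  | .app _ As => ∀ i, (As i).varsIn Vs

/-- A Σ-PNmatrix: a set of truth-values (carrier), designated values,
and a (possibly partial, non-deterministic) truth-table for each connective. -/
structure Mat (C : Type) (ar : C → ℕ) (V : Type) where
  carrier : Set V
  desig : Set V
  int : (c : C) → (Fin (ar c) → V) → Set V

/-- Well-formedness: `D ⊆ V` and truth-tables take values in `V`. -/
def Mat.WF (M : Mat C ar V) : Prop :=
  M.desig ⊆ M.carrier ∧
  ∀ (c : C) (xs : Fin (ar c) → V), (∀ i, xs i ∈ M.carrier) → M.int c xs ⊆ M.carrier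

/-- An `M`-valuation. -/
def Mat.IsVal (M : Mat C ar V) (v : Fm C ar P → V) : Prop :=
  (∀ A, v A ∈ M.carrier) ∧
  ∀ (c : C) (As : Fin (ar c) → Fm C ar P), v (.app c As) ∈ M.int c (fun i => v (As i))

/-- The (single conclusion) consequence relation `⊢_M`. -/
def Mat.Conseq (M : Mat C ar V) (Γ : Set (Fm C ar P)) (A : Fm C ar P) : Prop :=
  ∀ v : Fm C ar P → V, M.IsVal v → (∀ B ∈ Γ, v B ∈ M.desig) → v A ∈ M.desig

/-- The strengthening `⊢_M^Ax` of `⊢_M` with (schema) axioms `Ax`. -/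
def Mat.ConseqAx (M : Mat C ar V) (Ax Γ : Set (Fm C ar P)) (A : Fm C ar P) : Prop :=
  M.Conseq (Γ ∪ instSet Ax) A

/-- The multiple-conclusion consequence relation `▷_M`. -/
def Mat.MConseq (M : Mat C ar V) (Γ Δ : Set (Fm C ar P)) : Prop :=
  ∀ v : Fm C ar P → V, M.IsVal v → (∀ B ∈ Γ, v B ∈ M.desig) → ∃ B ∈ Δ, v B ∈ M.desig

/-- The set `A_M(x₁,…,xₙ)` of possible values of `A` when `pᵢ ↦ xᵢ`. -/
def Mat.fmSet (M : Mat C ar V) (n : ℕ) (A : Fm C ar ℕ) (xs : Fin n → V) : Set V :=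
  {y | ∃ v : Fm C ar ℕ → V, M.IsVal v ∧ (∀ i : Fin n, v (Fm.var i.1) = xs i) ∧ v A = y}

/-- `M` is `S`-deterministic. -/
def Mat.DetOn (M : Mat C ar V) (S : Set C) : Prop :=
  ∀ c ∈ S, ∀ xs : Fin (ar c) → V, (∀ i, xs i ∈ M.carrier) → (M.int c xs).Subsingleton

/-- `M` is total. -/
def Mat.Total (M : Mat C ar V) : Prop :=
  ∀ (c : C) (xs : Fin (ar c) → V), (∀ i, xs i ∈ M.carrier) → (M.int c xs).Nonempty

/-- `M'` is a refinement of `M`. -/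
def IsRefinement (M' M : Mat C ar V) : Prop :=
  M'.carrier ⊆ M.carrier ∧
  M'.desig = M.desig ∩ M'.carrier ∧
  ∀ (c : C) (xs : Fin (ar c) → V), (∀ i, xs i ∈ M'.carrier) → M'.int c xs ⊆ M.int c xs

/-- `E` is an expansion function for `M` with contraction `ct`:
the sets `E x` (for truth-values `x` of `M`) are non-empty and `ct` picks, for each
element of `E x`, the unique `x` it expands (this forces pairwise disjointness). -/
def IsExpansion (M : Mat C ar V) (E : V → Set W) (ct : W → V) : Prop :=
  (∀ x ∈ M.carrier, (E x).Nonempty) ∧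
  (∀ x ∈ M.carrier, ∀ y ∈ E x, ct y = x)

/-- The `E`-expansion of `M`. -/
def expMat (M : Mat C ar V) (E : V → Set W) (ct : W → V) : Mat C ar W where
  carrier := ⋃ x ∈ M.carrier, E x
  desig := ⋃ x ∈ M.desig, E x
  int := fun c ys => ⋃ x ∈ M.int c (fun i => ct (ys i)), E x

/-- A rexpansion of `M` is a refinement of some `E`-expansion of `M`. -/
def IsRexpansion (M' : Mat C ar W) (M : Mat C ar V) : Prop :=
  ∃ (E : V → Set W) (ct : W → V), IsExpansion M E ct ∧ IsRefinement M' (expMat M E ct)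

theorem Mat.DetOn.eq_of_isVal {M : Mat C ar V} {S : Set C} (hdet : M.DetOn S)
    {u u' : Fm C ar P → V} (hu : M.IsVal u) (hu' : M.IsVal u') {Vs : Set P}
    (hvars : ∀ p ∈ Vs, u (.var p) = u' (.var p)) :
    ∀ {A : Fm C ar P}, A.usesOnly S → A.varsIn Vs → u A = u' A
  | .var p, _, hp => hvars p hp
  | .app c As, ⟨hc, hAs⟩, hAsVs => by
    have hargs : (fun i => u (As i)) = fun i => u' (As i) :=
      funext fun i => hdet.eq_of_isVal hu hu' hvars (hAs i) (hAsVs i)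
    refine hdet c hc _ (fun i => hu.1 (As i)) (hu.2 c As) ?_
    rw [hargs]
    exact hu'.2 c As

namespace IsExpansion

variable {M : Mat C ar V} {E : V → Set W} {ct : W → V}

theorem contract_mem (hE : IsExpansion M E ct) {s : Set V} (hs : s ⊆ M.carrier) {w : W}
    (hw : w ∈ ⋃ x ∈ s, E x) : ct w ∈ s := by
  obtain ⟨x, hx, hwx⟩ := Set.mem_iUnion₂.mp hw
  rwa [hE.2 x (hs hx) w hwx]

theorem mem_contract (hE : IsExpansion M E ct) {w : W} (hw : w ∈ (expMat M E ct).carrier) :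
    w ∈ E (ct w) := by
  obtain ⟨x, hx, hwx⟩ := Set.mem_iUnion₂.mp hw
  rwa [hE.2 x hx w hwx]

end IsExpansion

namespace IsRefinement

variable {M : Mat C ar V} {E : V → Set W} {ct : W → V} {M' : Mat C ar W}

theorem mem_desig_iff_contract_mem (hWF : M.WF) (hE : IsExpansion M E ct)
    (hM' : IsRefinement M' (expMat M E ct)) {w : W} (hw : w ∈ M'.carrier) :
    w ∈ M'.desig ↔ ct w ∈ M.desig := by
  rw [hM'.2.1, Set.mem_inter_iff, and_iff_left hw]
  exact ⟨hE.contract_mem hWF.1, fun hct => Set.mem_biUnion hct (hE.mem_contract (hM'.1 hw))⟩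

theorem isVal_comp_contract (hWF : M.WF) (hE : IsExpansion M E ct)
    (hM' : IsRefinement M' (expMat M E ct)) {v : Fm C ar P → W} (hv : M'.IsVal v) :
    M.IsVal (ct ∘ v) := by
  have hcarrier : ∀ A, ct (v A) ∈ M.carrier :=
    fun A => hE.contract_mem subset_rfl (hM'.1 (hv.1 A))
  refine ⟨hcarrier, fun c As => hE.contract_mem (hWF.2 c _ fun i => hcarrier (As i)) ?_⟩
  exact hM'.2.2 c _ (fun i => hv.1 (As i)) (hv.2 c As)

end IsRefinement

theorem stmt0_general {C : Type} {ar : C → ℕ} {V W : Type}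
    (M : Mat C ar V) (hWF : M.WF) (S' : Set C) (hdet : M.DetOn S')
    (M' : Mat C ar W) (hrex : IsRexpansion M' M)
    (n : ℕ) (A : Fm C ar ℕ) (hA : A.usesOnly S') (hvars : A.varsIn (Set.Iio n))
    (xs : Fin n → W)
    (y z : W) (hy : y ∈ M'.fmSet n A xs) (hz : z ∈ M'.fmSet n A xs) :
    y ∈ M'.desig ↔ z ∈ M'.desig := by
  obtain ⟨E, ct, hE, hM'⟩ := hrex
  obtain ⟨v, hv, hvxs, rfl⟩ := hy
  obtain ⟨w, hw, hwxs, rfl⟩ := hz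
  have hvw : ct (v A) = ct (w A) :=
    hdet.eq_of_isVal (hM'.isVal_comp_contract hWF hE hv) (hM'.isVal_comp_contract hWF hE hw)
      (fun p hp => by simp only [Function.comp_apply, hvxs ⟨p, hp⟩, hwxs ⟨p, hp⟩]) hA hvars
  rw [hM'.mem_desig_iff_contract_mem hWF hE (hv.1 A), hM'.mem_desig_iff_contract_mem hWF hE (hw.1 A), hvw]

/-- Lemma `easylemma`: if `M` is `Σ'`-deterministic, `M†` is a rexpansion of `M`,
`A` uses only connectives from `Σ'` and variables among `p₁,…,pₙ`, and
`y, z ∈ A_{M†}(x₁,…,xₙ)`, then `y` is designated in `M†` iff `z` is. -/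
theorem stmt0 {C : Type} {ar : C → ℕ} {V W : Type}
    (M : Mat C ar V) (hWF : M.WF) (S' : Set C) (hdet : M.DetOn S')
    (M' : Mat C ar W) (hrex : IsRexpansion M' M)
    (n : ℕ) (A : Fm C ar ℕ) (hA : A.usesOnly S') (hvars : A.varsIn (Set.Iio n))
    (xs : Fin n → W) (hxs : ∀ i, xs i ∈ M'.carrier)
    (y z : W) (hy : y ∈ M'.fmSet n A xs) (hz : z ∈ M'.fmSet n A xs) :
    y ∈ M'.desig ↔ z ∈ M'.desig :=
  stmt0_general M hWF S' hdet M' hrex n A hA hvars xs y z hy hz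

end PNPaper
end

section
/- Let M = ⟨V, D, ·_M⟩ be a Σ-PNmatrix and Ax ⊆ L_Σ(P). Define the Σ-PNmatrix M♭_Ax = ⟨V♭, D♭, ·_{M♭}⟩ by: V♭ = {(x, A) ∈ V × L_Σ(P) : if A ∈ Ax^inst then x ∈ D}; D♭ = (D × L_Σ(P)) ∩ V♭; and for each k-place connective © ∈ Σ, ©_{M♭}((x₁, A₁),…,(x_k, A_k)) = {(x, ©(A₁,…,A_k)) ∈ V♭ : x ∈ ©_M(x₁,…,x_k)}. Then M♭_Ax is a rexpansion of M, and the consequence relation ⊢_{M♭_Ax} coincides with ⊢_M^Ax, the strengthening of ⊢_M with axioms Ax. -/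
set_option autoImplicit false

namespace PNPaper

variable {C : Type} {ar : C → ℕ} {P Q : Type} {V W : Type}

/-- The truth-values of `M♭_Ax`: pairs `(x, A)` such that `x ∈ D` whenever `A ∈ Ax^inst`. -/
def flatCarrier {C : Type} {ar : C → ℕ} {V : Type} (M : Mat C ar V)
    (Ax : Set (Fm C ar ℕ)) : Set (V × Fm C ar ℕ) :=
  {xa | xa.1 ∈ M.carrier ∧ (xa.2 ∈ instSet Ax → xa.1 ∈ M.desig)}

/-- The PNmatrix `M♭_Ax` of Theorem `flat`. -/
def flatMat {C : Type} {ar : C → ℕ} {V : Type} (M : Mat C ar V)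
    (Ax : Set (Fm C ar ℕ)) : Mat C ar (V × Fm C ar ℕ) where
  carrier := flatCarrier M Ax
  desig := {xa | xa.1 ∈ M.desig} ∩ flatCarrier M Ax
  int := fun c ys =>
    {xa | xa ∈ flatCarrier M Ax ∧ xa.1 ∈ M.int c (fun i => (ys i).1) ∧
          xa.2 = Fm.app c (fun i => (ys i).2)}

/-!
Along an `M♭_Ax`-valuation `v` the second components are forced: `(v B).2` is the instance of `B`
under the substitution `p ↦ (v p).2`. Since `Ax^inst` is closed under substitution, every
`B ∈ Ax^inst` gets a designated first component, so the first components form an `M`-valuation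
satisfying the axioms. Conversely an `M`-valuation `w` satisfying `Ax^inst` lifts to
`B ↦ (w B, B)`. Rexpansion is witnessed by expanding `x` to `{x} × L_Σ(P)`.
-/

lemma Fm.subst_subst {R : Type} (σ : Q → Fm C ar P) (τ : P → Fm C ar R) (A : Fm C ar Q) :
    (A.subst σ).subst τ = A.subst (fun q => (σ q).subst τ) := by
  induction A with
  | var q => rfl
  | app c As ih => exact congrArg (Fm.app c) (funext ih)

lemma subst_mem_instSet {Ax : Set (Fm C ar P)} {B : Fm C ar P} (hB : B ∈ instSet Ax)
    (τ : P → Fm C ar P) : B.subst τ ∈ instSet Ax := by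
  obtain ⟨A, hA, σ, rfl⟩ := hB
  exact ⟨A, hA, fun q => (σ q).subst τ, Fm.subst_subst σ τ A⟩

theorem isRexpansion_of_fst {X : Type} [Nonempty X] {M : Mat C ar V} {M' : Mat C ar (V × X)}
    (hcarrier : M'.carrier ⊆ Prod.fst ⁻¹' M.carrier)
    (hdesig : M'.desig = Prod.fst ⁻¹' M.desig ∩ M'.carrier)
    (hint : ∀ (c : C) (ys : Fin (ar c) → V × X), (∀ i, ys i ∈ M'.carrier) →
      M'.int c ys ⊆ Prod.fst ⁻¹' M.int c (fun i => (ys i).1)) :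
    IsRexpansion M' M := by
  have fibre_eq : ∀ S : Set V, ⋃ x ∈ S, {x} ×ˢ (Set.univ : Set X) = Prod.fst ⁻¹' S := by
    intro S; ext ⟨x, a⟩; simp
  refine ⟨fun x => {x} ×ˢ Set.univ, Prod.fst, ⟨?_, ?_⟩, ?_, ?_, ?_⟩
  · exact fun x _ => ⟨(x, Classical.arbitrary X), rfl, trivial⟩
  · rintro x _ y ⟨rfl, -⟩; rfl
  · simpa only [expMat, fibre_eq] using hcarrier
  · simpa only [expMat, fibre_eq] using hdesig
  · simpa only [expMat, fibre_eq] using hint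

instance [Nonempty P] : Nonempty (Fm C ar P) :=
  ⟨.var (Classical.arbitrary P)⟩

section Flat

variable {M : Mat C ar V} {Ax : Set (Fm C ar ℕ)}

theorem flatMat_isRexpansion : IsRexpansion (flatMat M Ax) M :=
  isRexpansion_of_fst (fun _ hy => hy.1) rfl (fun _ _ _ _ hy => hy.2.1)

lemma Mat.IsVal.flatMat_snd {v : Fm C ar ℕ → V × Fm C ar ℕ} (hv : (flatMat M Ax).IsVal v)
    (B : Fm C ar ℕ) : (v B).2 = B.subst (fun p => (v (.var p)).2) := by
  induction B with
  | var p => rfl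
  | app c As ih => rw [(hv.2 c As).2.2]; exact congrArg (Fm.app c) (funext ih)

lemma Mat.IsVal.flatMat_fst {v : Fm C ar ℕ → V × Fm C ar ℕ} (hv : (flatMat M Ax).IsVal v) :
    M.IsVal (fun B => (v B).1) :=
  ⟨fun B => (hv.1 B).1, fun c As => (hv.2 c As).2.1⟩

lemma Mat.IsVal.flatMat_fst_mem_desig_of_mem_instSet {v : Fm C ar ℕ → V × Fm C ar ℕ}
    (hv : (flatMat M Ax).IsVal v) {B : Fm C ar ℕ} (hB : B ∈ instSet Ax) : (v B).1 ∈ M.desig :=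
  (hv.1 B).2 (hv.flatMat_snd B ▸ subst_mem_instSet hB _)

lemma Mat.IsVal.flatMat_pair {w : Fm C ar ℕ → V} (hw : M.IsVal w)
    (hAx : ∀ B ∈ instSet Ax, w B ∈ M.desig) : (flatMat M Ax).IsVal (fun B => (w B, B)) :=
  ⟨fun B => ⟨hw.1 B, hAx B⟩, fun c As => ⟨⟨hw.1 _, hAx _⟩, hw.2 c As, rfl⟩⟩

theorem flatMat_conseq_iff_conseqAx {Γ : Set (Fm C ar ℕ)} {A : Fm C ar ℕ} :
    (flatMat M Ax).Conseq Γ A ↔ M.ConseqAx Ax Γ A := by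
  constructor
  · intro h w hw hΓAx
    have hv := hw.flatMat_pair fun B hB => hΓAx B (.inr hB)
    exact (h _ hv fun B hB => ⟨hΓAx B (.inl hB), hv.1 B⟩).1
  · intro h v hv hΓ
    refine ⟨h _ hv.flatMat_fst ?_, hv.1 A⟩
    rintro B (hB | hB)
    · exact (hΓ B hB).1
    · exact hv.flatMat_fst_mem_desig_of_mem_instSet hB

end Flat

theorem stmt2_general {C : Type} {ar : C → ℕ} {V : Type}
    (M : Mat C ar V) (Ax : Set (Fm C ar ℕ)) :
    IsRexpansion (flatMat M Ax) M ∧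
    ∀ (Γ : Set (Fm C ar ℕ)) (A : Fm C ar ℕ),
      M.ConseqAx Ax Γ A ↔ (flatMat M Ax).Conseq Γ A :=
  ⟨flatMat_isRexpansion, fun _ _ => flatMat_conseq_iff_conseqAx.symm⟩

/-- Theorem `flat`: `M♭_Ax` is a rexpansion of `M`, and the consequence
relation `⊢_{M♭_Ax}` coincides with the strengthening `⊢_M^Ax`. -/
theorem stmt2 {C : Type} {ar : C → ℕ} {V : Type}
    (M : Mat C ar V) (hWF : M.WF) (Ax : Set (Fm C ar ℕ)) :
    IsRexpansion (flatMat M Ax) M ∧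
    ∀ (Γ : Set (Fm C ar ℕ)) (A : Fm C ar ℕ),
      M.ConseqAx Ax Γ A ↔ (flatMat M Ax).Conseq Γ A :=
  stmt2_general M Ax

end PNPaper
end

section
/- Let M = ⟨V, D, ·_M⟩ be a Σ-PNmatrix, Ax ⊆ L_Σ(P), and M♭_Ax the Σ-PNmatrix with values V♭ = {(x, A) ∈ V × L_Σ(P) : if A ∈ Ax^inst then x ∈ D}, designated values D♭ = (D × L_Σ(P)) ∩ V♭, and ©_{M♭}((x₁, A₁),…,(x_k, A_k)) = {(x, ©(A₁,…,A_k)) ∈ V♭ : x ∈ ©_M(x₁,…,x_k)}. If v♭ is an M♭_Ax-valuation and v♭(A) = (x, B), then B is a substitution instance of A, i.e., B ∈ A^inst; concretely B = A^σ for the substitution σ given by σ(p) = C whenever v♭(p) = (y, C). -/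
set_option autoImplicit false

namespace PNPaper

variable {C : Type} {ar : C → ℕ} {P Q : Type} {V W : Type}

theorem Fm.eq_subst_of_map_app (w : Fm C ar P → Fm C ar Q)
    (hw : ∀ (c : C) (As : Fin (ar c) → Fm C ar P), w (.app c As) = .app c (fun i => w (As i)))
    (A : Fm C ar P) : w A = A.subst (fun p => w (.var p)) := by
  induction A with
  | var p => rfl
  | app c As ih => simp only [hw, Fm.subst, ih]

theorem subst_mem_instSet_singleton (A : Fm C ar P) (σ : P → Fm C ar P) :
    A.subst σ ∈ instSet {A} :=
  ⟨A, rfl, σ, rfl⟩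

theorem flatMat_isVal_snd_app {M : Mat C ar V} {Ax : Set (Fm C ar ℕ)}
    {v : Fm C ar ℕ → V × Fm C ar ℕ} (hv : (flatMat M Ax).IsVal v)
    (c : C) (As : Fin (ar c) → Fm C ar ℕ) :
    (v (.app c As)).2 = .app c (fun i => (v (As i)).2) :=
  (hv.2 c As).2.2

theorem stmt4_general {C : Type} {ar : C → ℕ} {V : Type}
    (M : Mat C ar V) (Ax : Set (Fm C ar ℕ))
    (v : Fm C ar ℕ → V × Fm C ar ℕ) (hv : (flatMat M Ax).IsVal v) (A : Fm C ar ℕ) :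
    (v A).2 = A.subst (fun p => (v (Fm.var p)).2) ∧ (v A).2 ∈ instSet {A} := by
  have hsubst := Fm.eq_subst_of_map_app (fun B => (v B).2) (flatMat_isVal_snd_app hv) A
  exact ⟨hsubst, hsubst ▸ subst_mem_instSet_singleton A _⟩

/-- if `v♭` is an `M♭_Ax`-valuation and `v♭(A) = (x, B)`, then `B = A^σ`
for the substitution `σ(p) = C` whenever `v♭(p) = (y, C)`; in particular `B ∈ A^inst`. -/
theorem stmt4 {C : Type} {ar : C → ℕ} {V : Type}
    (M : Mat C ar V) (hWF : M.WF) (Ax : Set (Fm C ar ℕ))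
    (v : Fm C ar ℕ → V × Fm C ar ℕ) (hv : (flatMat M Ax).IsVal v) (A : Fm C ar ℕ) :
    (v A).2 = A.subst (fun p => (v (Fm.var p)).2) ∧ (v A).2 ∈ instSet {A} :=
  stmt4_general M Ax v hv A

end PNPaper
end

section
/- Let Σ be the signature with a single 2-place connective →, and let MP = ⟨{0,1}, {1}, ·_MP⟩ be the Σ-Nmatrix with →_MP(1,0) = {0} and →_MP(x,y) = {0,1} for all other pairs (x,y). Then ⊢_MP coincides exactly with the consequence relation generated by the single Hilbert-style rule of modus ponens (from p and p → q infer q): Γ ⊢_MP A if and only if A is derivable from Γ by repeated applications of modus ponens (i.e., A belongs to the least set containing Γ and closed under: if B and B → C are in the set so is C). -/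
/-!
The only constraint `MP` puts on a valuation is `→(1,0) = {0}`, i.e. that the set of formulas
it designates is closed under modus ponens; conversely the characteristic function of any such
set is a valuation. So every valuation designating `Γ` designates its modus-ponens closure, and
the characteristic function of that closure is a valuation refuting everything outside it.
-/

set_option autoImplicit false

namespace PNPaper

variable {C : Type} {ar : C → ℕ} {P Q : Type} {V W : Type}

/-- The signature with a single 2-place connective `→`. -/
abbrev impAr : Unit → ℕ := fun _ => 2

/-- Formulas of the implicative signature. -/
abbrev Fm7 := Fm Unit impAr ℕ

/-- Implication `A → B`. -/
def imp (A B : Fm7) : Fm7 := Fm.app () ![A, B]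

/-- The two-valued Nmatrix `MP` with classical-looking implication except that
`→(0,0), →(0,1), →(1,1)` are fully non-deterministic and `→(1,0) = {0}`. -/
def MPmat : Mat Unit impAr Bool where
  carrier := Set.univ
  desig := {true}
  int := fun _ xs => if xs 0 = true ∧ xs 1 = false then {false} else Set.univ

/-- Derivability by repeated applications of modus ponens: the least set containing `Γ`
and closed under: if `B` and `B → C` are in the set, so is `C`. -/
inductive MPDeriv (Γ : Set Fm7) : Fm7 → Prop where
  | prem {A : Fm7} : A ∈ Γ → MPDeriv Γ A
  | mp {A B : Fm7} : MPDeriv Γ A → MPDeriv Γ (imp A B) → MPDeriv Γ B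

theorem Fm.app_unit_eq_imp (As : Fin (impAr ()) → Fm7) : Fm.app () As = imp (As 0) (As 1) := by
  rw [imp]
  congr
  funext i
  fin_cases i <;> rfl

theorem mem_MPmat_desig {b : Bool} : b ∈ MPmat.desig ↔ b = true :=
  Set.mem_singleton_iff

theorem isVal_MPmat_iff {v : Fm7 → Bool} :
    MPmat.IsVal v ↔ ∀ A B, v A = true → v (imp A B) = true → v B = true := by
  simp only [Mat.IsVal, MPmat, Set.mem_univ, implies_true, true_and]
  refine ⟨fun hv A B hA hAB => ?_, fun hmp ⟨⟩ As => ?_⟩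
  · by_contra hB
    have h := hv () ![A, B]
    simp_all [imp]
  · split_ifs with h
    · rw [Fm.app_unit_eq_imp, Set.mem_singleton_iff, Bool.eq_false_iff]
      exact fun hAB => absurd (hmp _ _ h.1 hAB) (by simp [h.2])
    · trivial

theorem isVal_MPmat_decide {T : Fm7 → Prop} [DecidablePred T]
    (hT : ∀ A B, T A → T (imp A B) → T B) : MPmat.IsVal (fun B => decide (T B)) :=
  isVal_MPmat_iff.2 fun A B hA hAB =>
    decide_eq_true (hT A B (of_decide_eq_true hA) (of_decide_eq_true hAB))

/-- `⊢_MP` coincides exactly with the consequence relation generated by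
the single Hilbert-style rule of modus ponens. -/
theorem stmt7 (Γ : Set Fm7) (A : Fm7) :
    MPmat.Conseq Γ A ↔ MPDeriv Γ A := by
  classical
  refine ⟨fun h => ?_, fun h v hv hΓ => ?_⟩
  · have hval := isVal_MPmat_decide (T := MPDeriv Γ) fun _ _ => MPDeriv.mp
    simpa [mem_MPmat_desig] using h _ hval fun B hB => by simpa [mem_MPmat_desig] using .prem hB
  · induction h with
    | prem hA => exact hΓ _ hA
    | mp _ _ ihA ihAB =>
      rw [mem_MPmat_desig] at ihA ihAB ⊢
      exact isVal_MPmat_iff.1 hv _ _ ihA ihAB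

end PNPaper
end

section
/- Let M = ⟨V, D, ·_M⟩ be a Σ-PNmatrix, Ax ⊆ L_Σ(P), Σ^d ⊆ Σ, Θ_Ax the look-ahead set of Ax, and M♯_Ax = ⟨V♯, D♯, ·_{M♯}⟩ the Σ-PNmatrix with V♯ = ⋃_{v ∈ Val_M^Ax} {f^A_v : A ∈ L_Σ(P)}, D♯ = {f ∈ V♯ : f(ε) ∈ D}, and ©_{M♯}(f₁,…,f_k) = ⋃_{v ∈ Val_M^Ax} {f^{©(A₁,…,A_k)}_v : f^{A_i}_v = f_i for 1 ≤ i ≤ k}. Then M♯_Ax is a refinement of the E-expansion of M for the expansion function E(x) = {f ∈ V^{Θ_Ax} : f(ε) = x}, whose contraction Ẽ satisfies Ẽ(f) = f(ε); in particular, for every k-place © ∈ Σ, every v ∈ Val_M, and all A₁,…,A_k ∈ L_Σ(P), f^{©(A₁,…,A_k)}_v(ε) ∈ ©_M(f^{A₁}_v(ε),…,f^{A_k}_v(ε)). -/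
set_option autoImplicit false

namespace PNPaper

variable {C : Type} {ar : C → ℕ} {P Q : Type} {V W : Type}

/-- The 1-place connectives of the signature that are not in `Σᵈ`. -/
def UC (C : Type) (ar : C → ℕ) (Sd : Set C) : Type := {c : C // ar c = 1 ∧ c ∉ Sd}

/-- The formula `wA` obtained by prefixing `A` with the string `w ∈ U*` of
1-place connectives. -/
def prefixFm {C : Type} {ar : C → ℕ} {Sd : Set C}
    (w : List (UC C ar Sd)) (A : Fm C ar ℕ) : Fm C ar ℕ :=
  w.foldr (fun c B => Fm.app c.1 (fun _ => B)) A

/-- A set of strings is closed under taking prefixes. -/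
def PrefixClosed {α : Type} (Th : Set (List α)) : Prop :=
  ∀ s t : List α, s <+: t → t ∈ Th → s ∈ Th

/-- `B` is a `Σᵈ`-simple formula (based on some connective `c`), with all prefixes of
the strings used in its decomposition belonging to the look-ahead set `Th`:
`B = A^σ` for a structure formula `A ∈ L_{Σᵈ}({q₁,…,qₙ,r₁,…,r_m})` and a substitution
`σ` with `σ(qᵢ) = wᵢ p_{jᵢ}` and `σ(r_l) = u_l c(p₁,…,p_k)`. -/
def SimpleWithin {C : Type} {ar : C → ℕ} (Sd : Set C)
    (Th : Set (List (UC C ar Sd))) (B : Fm C ar ℕ) : Prop :=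
  ∃ (c : C) (n m : ℕ) (A : Fm C ar (Fin n ⊕ Fin m))
    (w : Fin n → List (UC C ar Sd)) (j : Fin n → Fin (ar c))
    (u : Fin m → List (UC C ar Sd)) (p : Fin (ar c) → ℕ),
      Function.Injective p ∧ A.usesOnly Sd ∧
      B = A.subst (Sum.elim
            (fun i => prefixFm (w i) (Fm.var (p (j i))))
            (fun l => prefixFm (u l) (Fm.app c (fun i => Fm.var (p i))))) ∧
      (∀ i t, t <+: w i → t ∈ Th) ∧ (∀ l t, t <+: u l → t ∈ Th)

/-- `Val_M^Ax`: the `M`-valuations designating all instances of the axioms. -/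
def ValAx {C : Type} {ar : C → ℕ} {V : Type} (M : Mat C ar V)
    (Ax : Set (Fm C ar ℕ)) : Set (Fm C ar ℕ → V) :=
  {v | M.IsVal v ∧ ∀ B ∈ instSet Ax, v B ∈ M.desig}

/-- The look-ahead function `f^A_v : Θ → V`, `f^A_v(w) = v(wA)`. -/
def fA {C : Type} {ar : C → ℕ} {V : Type} {Sd : Set C}
    (Th : Set (List (UC C ar Sd))) (v : Fm C ar ℕ → V) (A : Fm C ar ℕ) : ↥Th → V :=
  fun w => v (prefixFm w.1 A)

/-- The PNmatrix `M♯_Ax` of the ♯-construction (Theorem `theconstruction`). -/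
def sharpMat {C : Type} {ar : C → ℕ} {V : Type} {Sd : Set C}
    (M : Mat C ar V) (Ax : Set (Fm C ar ℕ)) (Th : Set (List (UC C ar Sd)))
    (hε : [] ∈ Th) : Mat C ar (↥Th → V) where
  carrier := {f | ∃ v ∈ ValAx M Ax, ∃ A, f = fA Th v A}
  desig := {f | (∃ v ∈ ValAx M Ax, ∃ A, f = fA Th v A) ∧ f ⟨[], hε⟩ ∈ M.desig}
  int := fun c fs =>
    {g | ∃ v ∈ ValAx M Ax, ∃ As : Fin (ar c) → Fm C ar ℕ,
      (∀ i, fA Th v (As i) = fs i) ∧ g = fA Th v (Fm.app c As)}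

/-! The contraction of the expansion is evaluation at `ε`, and `f^A_v(ε) = v(A)`. Hence membership
in the `E`-expansion of `M` is decided by the value at `ε` alone, and every clause of the
refinement reduces to the valuation `v` behind a look-ahead function being an `M`-valuation. -/

section Evaluation

variable {α : Type} (M : Mat C ar V) (a : α)

theorem isExpansion_eval :
    IsExpansion M (fun x => {f : α → V | f a = x}) (fun f => f a) :=
  ⟨fun x _ => ⟨fun _ => x, rfl⟩, fun _ _ _ hy => hy⟩

@[simp]
theorem mem_expMat_eval_carrier {f : α → V} :
    f ∈ (expMat M (fun x => {f : α → V | f a = x}) (fun f => f a)).carrier ↔ f a ∈ M.carrier := by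
  simp [expMat]

@[simp]
theorem mem_expMat_eval_desig {f : α → V} :
    f ∈ (expMat M (fun x => {f : α → V | f a = x}) (fun f => f a)).desig ↔ f a ∈ M.desig := by
  simp [expMat]

@[simp]
theorem mem_expMat_eval_int {c : C} {fs : Fin (ar c) → α → V} {g : α → V} :
    g ∈ (expMat M (fun x => {f : α → V | f a = x}) (fun f => f a)).int c fs ↔
      g a ∈ M.int c (fun i => fs i a) := by
  simp [expMat]

end Evaluation

section Sharp

variable {Sd : Set C} {Th : Set (List (UC C ar Sd))} (hε : [] ∈ Th)

theorem Mat.IsVal.fA_app_nil_mem_int {M : Mat C ar V} {v : Fm C ar ℕ → V} (hv : M.IsVal v)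
    (c : C) (As : Fin (ar c) → Fm C ar ℕ) :
    fA Th v (Fm.app c As) ⟨[], hε⟩ ∈ M.int c (fun i => fA Th v (As i) ⟨[], hε⟩) :=
  hv.2 c As

theorem sharpMat_isRefinement_expMat (M : Mat C ar V) (Ax : Set (Fm C ar ℕ)) :
    IsRefinement (sharpMat M Ax Th hε)
      (expMat M (fun x => {f : ↥Th → V | f ⟨[], hε⟩ = x}) (fun f => f ⟨[], hε⟩)) := by
  refine ⟨?carrier, ?desig, ?int⟩
  case carrier =>
    rintro f ⟨v, hv, A, rfl⟩
    exact (mem_expMat_eval_carrier M _).2 (hv.1.1 A)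
  case desig =>
    ext f
    simp only [Set.mem_inter_iff, mem_expMat_eval_desig]
    exact and_comm
  case int =>
    rintro c fs - g ⟨v, hv, As, hAs, rfl⟩
    rw [mem_expMat_eval_int, ← funext hAs]
    exact hv.1.fA_app_nil_mem_int hε c As

end Sharp

theorem stmt10_general {C : Type} {ar : C → ℕ} {V : Type} {Sd : Set C}
    (M : Mat C ar V) (Ax : Set (Fm C ar ℕ))
    (Th : Set (List (UC C ar Sd))) (hε : [] ∈ Th) :
    IsExpansion M (fun x => {f : ↥Th → V | f ⟨[], hε⟩ = x}) (fun f => f ⟨[], hε⟩) ∧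
    IsRefinement (sharpMat M Ax Th hε)
      (expMat M (fun x => {f : ↥Th → V | f ⟨[], hε⟩ = x}) (fun f => f ⟨[], hε⟩)) ∧
    ∀ (c : C) (v : Fm C ar ℕ → V), M.IsVal v → ∀ As : Fin (ar c) → Fm C ar ℕ,
      fA Th v (Fm.app c As) ⟨[], hε⟩ ∈ M.int c (fun i => fA Th v (As i) ⟨[], hε⟩) :=
  ⟨isExpansion_eval M _, sharpMat_isRefinement_expMat hε M Ax,
    fun c _ hv => hv.fA_app_nil_mem_int hε c⟩

/-- `M♯_Ax` is a refinement of the `E`-expansion of `M` for the expansion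
function `E(x) = {f ∈ V^Θ : f(ε) = x}`, whose contraction is `Ẽ(f) = f(ε)`; in
particular `f^{c(A₁,…,A_k)}_v(ε) ∈ c_M(f^{A₁}_v(ε),…,f^{A_k}_v(ε))` for every `M`-valuation `v`. -/
theorem stmt10 {C : Type} {ar : C → ℕ} {V : Type} {Sd : Set C}
    (M : Mat C ar V) (hWF : M.WF) (Ax : Set (Fm C ar ℕ))
    (Th : Set (List (UC C ar Sd))) (hε : [] ∈ Th) :
    IsExpansion M (fun x => {f : ↥Th → V | f ⟨[], hε⟩ = x}) (fun f => f ⟨[], hε⟩) ∧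
    IsRefinement (sharpMat M Ax Th hε)
      (expMat M (fun x => {f : ↥Th → V | f ⟨[], hε⟩ = x}) (fun f => f ⟨[], hε⟩)) ∧
    ∀ (c : C) (v : Fm C ar ℕ → V), M.IsVal v → ∀ As : Fin (ar c) → Fm C ar ℕ,
      fA Th v (Fm.app c As) ⟨[], hε⟩ ∈ M.int c (fun i => fA Th v (As i) ⟨[], hε⟩) :=
  stmt10_general M Ax Th hε

end PNPaper
end

section
/- Let M, Ax, Σ^d, Θ_Ax and the Σ-PNmatrix M♯_Ax be as in the ♯-construction. Let v♯ be an M♯_Ax-valuation, A ∈ L_Σ(P), and u, w ∈ U* strings over the 1-place connectives not in Σ^d such that uw ∈ Θ_Ax. Then v♯(wA)(u) = v♯(A)(uw). -/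
/-! A value of `c(B)` in `M♯_Ax` has the form `f^{c(A')}_{v₀}` with `f^{A'}_{v₀} = v♯(B)`, so for
`c ∈ U` it sends `s` to `v₀(s c A') = v♯(B)(s c)`: each `c ∈ U` acts as a shift of look-ahead
functions. Induction on `w`, using prefix closure of `Θ_Ax`, composes these shifts. -/

set_option autoImplicit false

namespace PNPaper

variable {C : Type} {ar : C → ℕ} {P Q : Type} {V W : Type}

theorem prefixFm_append {Sd : Set C} (s t : List (UC C ar Sd)) (A : Fm C ar ℕ) :
    prefixFm (s ++ t) A = prefixFm s (prefixFm t A) :=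
  List.foldr_append ..

theorem apply_of_mem_sharpMat_int {Sd : Set C} {M : Mat C ar V} {Ax : Set (Fm C ar ℕ)}
    {Th : Set (List (UC C ar Sd))} {hε : [] ∈ Th} {c : UC C ar Sd}
    {fs : Fin (ar c.1) → ↥Th → V} {g : ↥Th → V} (hg : g ∈ (sharpMat M Ax Th hε).int c.1 fs)
    (i : Fin (ar c.1)) (s : List (UC C ar Sd)) (hs : s ∈ Th) (hsc : s ++ [c] ∈ Th) :
    g ⟨s, hs⟩ = fs i ⟨s ++ [c], hsc⟩ := by
  obtain ⟨v₀, -, As, hAs, rfl⟩ := hg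
  have : Subsingleton (Fin (ar c.1)) := by rw [c.2.1]; infer_instance
  have hAs_const : As = fun _ => As i := funext fun j => congrArg As (Subsingleton.elim j i)
  rw [← hAs i]
  change v₀ (prefixFm s (Fm.app c.1 As)) = v₀ (prefixFm (s ++ [c]) (As i))
  rw [prefixFm_append, hAs_const]
  rfl

theorem stmt11_general {C : Type} {ar : C → ℕ} {V : Type} {Sd : Set C}
    (M : Mat C ar V) (Ax : Set (Fm C ar ℕ))
    (Th : Set (List (UC C ar Sd))) (hε : [] ∈ Th) (hpc : PrefixClosed Th)
    (v : Fm C ar ℕ → (↥Th → V)) (hv : (sharpMat M Ax Th hε).IsVal v)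
    (A : Fm C ar ℕ) (u w : List (UC C ar Sd)) (hu : u ∈ Th) (huw : u ++ w ∈ Th) :
    v (prefixFm w A) ⟨u, hu⟩ = v A ⟨u ++ w, huw⟩ := by
  induction w generalizing u with
  | nil => simp only [prefixFm, List.foldr_nil, List.append_nil]
  | cons c w ih =>
    have huc : u ++ [c] ∈ Th := hpc _ _ ⟨w, by simp⟩ huw
    have huc_w : u ++ [c] ++ w ∈ Th := by simpa using huw
    calc v (prefixFm (c :: w) A) ⟨u, hu⟩
        = v (prefixFm w A) ⟨u ++ [c], huc⟩ :=
          apply_of_mem_sharpMat_int (hv.2 c.1 _) ⟨0, by rw [c.2.1]; exact Nat.one_pos⟩ u hu huc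
      _ = v A ⟨u ++ [c] ++ w, huc_w⟩ := ih _ huc huc_w
      _ = v A ⟨u ++ c :: w, huw⟩ := by simp only [List.append_assoc, List.singleton_append]

/-- for every `M♯_Ax`-valuation `v♯`, formula `A`, and strings `u, w`
over the 1-place connectives not in `Σᵈ` with `uw ∈ Θ_Ax`, one has
`v♯(wA)(u) = v♯(A)(uw)`. -/
theorem stmt11 {C : Type} {ar : C → ℕ} {V : Type} {Sd : Set C}
    (M : Mat C ar V) (hWF : M.WF) (Ax : Set (Fm C ar ℕ))
    (Th : Set (List (UC C ar Sd))) (hε : [] ∈ Th) (hpc : PrefixClosed Th)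
    (v : Fm C ar ℕ → (↥Th → V)) (hv : (sharpMat M Ax Th hε).IsVal v)
    (A : Fm C ar ℕ) (u w : List (UC C ar Sd)) (hu : u ∈ Th) (huw : u ++ w ∈ Th) :
    v (prefixFm w A) ⟨u, hu⟩ = v A ⟨u ++ w, huw⟩ :=
  stmt11_general M Ax Th hε hpc v hv A u w hu huw

end PNPaper
end

section
/- Let M = ⟨V, D, ·_M⟩ be a Σ-PNmatrix and M† = ⟨V†, D†, ·_{M†}⟩ a rexpansion of M via an expansion function E with contraction Ẽ. Then for every M†-valuation v†, the composite Ẽ ∘ v† is an M-valuation; consequently, for every A ∈ L_Σ({p₁,…,pₙ}) and all x₁,…,xₙ ∈ V†, Ẽ(A_{M†}(x₁,…,xₙ)) ⊆ A_M(Ẽ(x₁),…,Ẽ(xₙ)). -/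
set_option autoImplicit false

namespace PNPaper

variable {C : Type} {ar : C → ℕ} {P Q : Type} {V W : Type}

/-!
A value of the `E`-expansion lying in `E x` is sent back to `x` by the contraction `ct`, and a
truth-table of the expansion is the union of the sets `E x` over the corresponding table of `M`;
a refinement only shrinks carriers and tables. Hence `ct` turns every step of an `M†`-valuation
into a step of an `M`-valuation. Well-formedness of `M` is what places the `x` obtained from a
table of `M` in its carrier, where `ct` inverts `E`.
-/

section Contraction

variable {M : Mat C ar V} {E : V → Set W} {ct : W → V}

theorem IsExpansion.contract_mem_carrier (hE : IsExpansion M E ct) {y : W}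
    (hy : y ∈ (expMat M E ct).carrier) : ct y ∈ M.carrier := by
  simp only [expMat, Set.mem_iUnion] at hy
  obtain ⟨x, hx, hyx⟩ := hy
  rwa [hE.2 x hx y hyx]

theorem IsExpansion.contract_mem_int (hWF : M.WF) (hE : IsExpansion M E ct) {c : C}
    {ys : Fin (ar c) → W} (hys : ∀ i, ct (ys i) ∈ M.carrier) {y : W}
    (hy : y ∈ (expMat M E ct).int c ys) : ct y ∈ M.int c (fun i => ct (ys i)) := by
  simp only [expMat, Set.mem_iUnion] at hy
  obtain ⟨x, hx, hyx⟩ := hy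
  rwa [hE.2 x (hWF.2 c _ hys hx) y hyx]

theorem Mat.IsVal.contract {M' : Mat C ar W} (hWF : M.WF) (hE : IsExpansion M E ct)
    (href : IsRefinement M' (expMat M E ct)) {v : Fm C ar P → W} (hv : M'.IsVal v) :
    M.IsVal (fun A => ct (v A)) := by
  have hcarrier : ∀ A, ct (v A) ∈ M.carrier := fun A =>
    hE.contract_mem_carrier (href.1 (hv.1 A))
  refine ⟨hcarrier, fun c As => hE.contract_mem_int hWF (fun i => hcarrier (As i)) ?_⟩
  exact href.2.2 c _ (fun i => hv.1 (As i)) (hv.2 c As)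

end Contraction

theorem Mat.image_fmSet_subset {M' : Mat C ar W} {M : Mat C ar V} (f : W → V)
    (hf : ∀ v : Fm C ar ℕ → W, M'.IsVal v → M.IsVal (fun A => f (v A)))
    (n : ℕ) (A : Fm C ar ℕ) (xs : Fin n → W) :
    f '' M'.fmSet n A xs ⊆ M.fmSet n A (fun i => f (xs i)) := by
  rintro _ ⟨_, ⟨v, hv, hvars, rfl⟩, rfl⟩
  exact ⟨fun B => f (v B), hf v hv, fun i => congrArg f (hvars i), rfl⟩

/-- if `M†` is a rexpansion of `M` via `E` with contraction `Ẽ = ct`, then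
`Ẽ ∘ v†` is an `M`-valuation for every `M†`-valuation `v†`, and consequently
`Ẽ(A_{M†}(x₁,…,xₙ)) ⊆ A_M(Ẽ(x₁),…,Ẽ(xₙ))`. -/
theorem stmt16 {C : Type} {ar : C → ℕ} {V W : Type}
    (M : Mat C ar V) (hWF : M.WF) (M' : Mat C ar W)
    (E : V → Set W) (ct : W → V) (hE : IsExpansion M E ct)
    (href : IsRefinement M' (expMat M E ct)) :
    (∀ v : Fm C ar ℕ → W, M'.IsVal v → M.IsVal (fun A => ct (v A))) ∧
    ∀ (n : ℕ) (A : Fm C ar ℕ), A.varsIn (Set.Iio n) →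
      ∀ xs : Fin n → W, (∀ i, xs i ∈ M'.carrier) →
        ct '' M'.fmSet n A xs ⊆ M.fmSet n A (fun i => ct (xs i)) := by
  have hval : ∀ v : Fm C ar ℕ → W, M'.IsVal v → M.IsVal (fun A => ct (v A)) :=
    fun _ hv => hv.contract hWF hE href
  exact ⟨hval, fun n A _ xs _ => Mat.image_fmSet_subset ct hval n A xs⟩

end PNPaper
end
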